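/- Fix $\alpha, \gamma > 0$ with $\alpha > \gamma/(2\gamma+1)$. Consider minimizing $E(h,h',M,M') = h'^{2\alpha} + 1/M + h^{2\gamma}/M'$ over positive reals $h,h',M,M'$ subject to the cost constraint $M/h + M'/h' = C$. Then the minimum value $E^*$ satisfies $E^* \le K\, C^{-\frac{4\alpha\gamma + 2\alpha}{4\alpha\gamma + 2\alpha + 1}}$ for a constant $K$ depending only on $\alpha,\gamma$, achieved by choosing $h = C^{-1/(4\alpha\gamma+2\alpha+1)}$, $h' = C^{-(2\gamma+1)/(4\alpha\gamma+2\alpha+1)}$, $M = C h$, $M' = C^{(4\alpha\gamma+2\alpha-2\gamma)/(4\alpha\gamma+2\alpha+1)}$ (up to constants). -/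

import Mathlib

/-!
Balance the three error terms. With `s = C^{-1/D}`, `D = 4αγ + 2α + 1`, take `h = s`,
`h' = s^{2γ+1}` and spend half the budget on each estimator, `M = hC/2`, `M' = h'C/2`.
Since `C = s^{-D}`, each of `h'^{2α}`, `1/M`, `h^{2γ}/M'` is a constant times
`s^{2α(2γ+1)} = C^{-(4αγ+2α)/D}`.
-/

open Real

lemma sInf_le_error_of_feasible {α γ C h h' M M' : ℝ} (hh : 0 < h) (hh' : 0 < h')
    (hM : 0 < M) (hM' : 0 < M') (hcost : M / h + M' / h' = C) :
    sInf {e : ℝ | ∃ h h' M M' : ℝ, 0 < h ∧ 0 < h' ∧ 0 < M ∧ 0 < M' ∧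
        M / h + M' / h' = C ∧ e = h' ^ (2 * α) + 1 / M + h ^ (2 * γ) / M'}
      ≤ h' ^ (2 * α) + 1 / M + h ^ (2 * γ) / M' := by
  refine csInf_le ⟨0, ?_⟩ ⟨h, h', M, M', hh, hh', hM, hM', hcost, rfl⟩
  rintro e ⟨a, b, c, d, ha, hb, hc, hd, -, rfl⟩
  positivity

lemma error_at_balanced_point {α γ C s : ℝ} (hs : 0 < s)
    (hC : s ^ (-(2 * α * (2 * γ + 1) + 1)) = C) :
    (s ^ (2 * γ + 1)) ^ (2 * α) + 1 / (s * (C / 2)) + s ^ (2 * γ) / (s ^ (2 * γ + 1) * (C / 2))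
      = 5 * s ^ (2 * α * (2 * γ + 1)) := by
  have hvariance : ∀ a : ℝ, s ^ a / (s ^ (a + 1) * (C / 2)) = 2 * s ^ (2 * α * (2 * γ + 1)) := by
    intro a
    have hpow : s ^ (2 * α * (2 * γ + 1)) * (s ^ (a + 1) * s ^ (-(2 * α * (2 * γ + 1) + 1)))
        = s ^ a := by
      rw [← rpow_add hs, ← rpow_add hs]
      ring_nf
    rw [← hC, div_eq_iff (by positivity)]
    linear_combination -hpow
  have hbias : (s ^ (2 * γ + 1)) ^ (2 * α) = s ^ (2 * α * (2 * γ + 1)) := by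
    rw [← rpow_mul hs.le, mul_comm]
  have hmc := hvariance 0
  rw [rpow_zero, zero_add, rpow_one] at hmc
  rw [hbias, hmc, hvariance]
  ring

theorem stmt13_general (α γ : ℝ) (hα : 0 < α) (hγ : 0 < γ) :
    ∃ K > 0, ∀ C : ℝ, 1 ≤ C →
      sInf {e : ℝ | ∃ h h' M M' : ℝ, 0 < h ∧ 0 < h' ∧ 0 < M ∧ 0 < M' ∧
          M / h + M' / h' = C ∧
          e = h' ^ (2 * α) + 1 / M + h ^ (2 * γ) / M'}
        ≤ K * C ^ (-(4 * α * γ + 2 * α) / (4 * α * γ + 2 * α + 1)) := by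
  refine ⟨5, by norm_num, fun C hC => ?_⟩
  have hC0 : 0 < C := one_pos.trans_le hC
  set D := 4 * α * γ + 2 * α + 1
  have hD : D ≠ 0 := by positivity
  set s := C ^ (-1 / D)
  have hs : 0 < s := rpow_pos_of_pos hC0 _
  have hexp : 2 * α * (2 * γ + 1) + 1 = D := by ring
  have hCs : s ^ (-(2 * α * (2 * γ + 1) + 1)) = C := by
    rw [← rpow_mul hC0.le, hexp, div_mul_eq_mul_div, neg_mul_neg, one_mul, div_self hD, rpow_one]
  have hrate : s ^ (2 * α * (2 * γ + 1)) = C ^ (-(4 * α * γ + 2 * α) / D) := by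
    rw [← rpow_mul hC0.le]
    congr 1
    field_simp
    ring
  have hcost : s * (C / 2) / s + s ^ (2 * γ + 1) * (C / 2) / s ^ (2 * γ + 1) = C := by
    field_simp
    ring
  calc _ ≤ _ := sInf_le_error_of_feasible hs (by positivity) (by positivity) (by positivity) hcost
    _ = 5 * s ^ (2 * α * (2 * γ + 1)) := error_at_balanced_point hs hCs
    _ = _ := by rw [hrate]

/-- Optimization underlying Proposition 1: minimizing
`h'^{2α} + 1/M + h^{2γ}/M'` under the cost constraint `M/h + M'/h' = C`
yields a minimum value bounded by `K C^{-(4αγ+2α)/(4αγ+2α+1)}` with `K`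
depending only on `α, γ`. -/
theorem stmt13 (α γ : ℝ) (hα : 0 < α) (hγ : 0 < γ)
    (hαγ : γ / (2 * γ + 1) < α) :
    ∃ K > 0, ∀ C : ℝ, 1 ≤ C →
      sInf {e : ℝ | ∃ h h' M M' : ℝ, 0 < h ∧ 0 < h' ∧ 0 < M ∧ 0 < M' ∧
          M / h + M' / h' = C ∧
          e = h' ^ (2 * α) + 1 / M + h ^ (2 * γ) / M'}
        ≤ K * C ^ (-(4 * α * γ + 2 * α) / (4 * α * γ + 2 * α + 1)) :=
  stmt13_general α γ hα hγ
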